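/- arXiv:2208.13489 — 2 statements merged into one kernel-verified Lean document; each statement's English description precedes it below -/
import Mathlib

section
/- Under the hypotheses and definitions of the gluing construction in the context, define e_{i,j} = e_i^− ∪ {v_{2j−1}^r} for every j ∈ [1, 2k−1] and i ∈ [0, T_1], and set H_∞ = H ∪ {e_{i,j} : i ∈ [0, T_1], j ∈ [1, 2k−1]} ∪ {{v_{4j−2}^r} ∪ e_{T_1}^− : j ∈ [1, k−1]} ∪ {{v_{4j}^r} ∪ e_0^− : j ∈ [1, k−1]}. Then the F_r-bootstrap process on the complete r-graph on V(H) with initially infected r-graph H_∞ is stationary, i.e., it infects no new r-edge. -/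
open Finset

section Bootstrap

variable {V : Type*} [DecidableEq V]

open Classical in
/-- One step of the `K_{r+1}^r`-bootstrap process in the complete `r`-graph with
vertex set `W`: an `r`-set `e ⊆ W` becomes infected if there is an `(r+1)`-set
`f ⊆ W` such that the copy of `K_{r+1}^r` spanned by `f` has `e` as its unique
edge not in `G`, i.e. `e = F' \ G`. -/
noncomputable def bootStep (r : ℕ) (W : Finset V) (G : Finset (Finset V)) :
    Finset (Finset V) :=
  G ∪ (W.powersetCard r).filter fun e =>
    ∃ f ∈ W.powersetCard (r + 1), f.powersetCard r \ G = {e}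

/-- `bootIter r W G₀ i` is the set `G_i` of edges infected after `i` steps. -/
noncomputable def bootIter (r : ℕ) (W : Finset V) (G : Finset (Finset V)) :
    ℕ → Finset (Finset V)
  | 0 => G
  | i + 1 => bootStep r W (bootIter r W G i)

/-- The running time: the least `i ≥ 0` with `G_{i+1} = G_i`. -/
noncomputable def runTime (r : ℕ) (W : Finset V) (G : Finset (Finset V)) : ℕ :=
  sInf {i | bootIter r W G (i + 1) = bootIter r W G i}

/-- The process started from `G` infects no new edge. -/
def Stationary (r : ℕ) (W : Finset V) (G : Finset (Finset V)) : Prop :=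
  bootStep r W G = G

/-- Started from `G₀`, the bootstrap process infects exactly the single new edge
`e i` at each step `i ∈ [1, T]` and is stationary afterwards (it runs for
exactly `T` steps). -/
def InfectsExactly (r : ℕ) (W : Finset V) (G₀ : Finset (Finset V)) (T : ℕ)
    (e : ℕ → Finset V) : Prop :=
  (∀ i, 1 ≤ i → i ≤ T →
      e i ∉ bootIter r W G₀ (i - 1) ∧
      bootIter r W G₀ i = insert (e i) (bootIter r W G₀ (i - 1))) ∧
  bootIter r W G₀ (T + 1) = bootIter r W G₀ T

/-- `H` is `(e_i)_{i=0}^T`-sequential on the vertex set `W`. -/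
def IsSequential (r : ℕ) (W : Finset V) (H : Finset (Finset V)) (T : ℕ)
    (e : ℕ → Finset V) : Prop :=
  e 0 ∈ H ∧
  (∀ i ≤ T, e i ⊆ W ∧ (e i).card = r) ∧
  InfectsExactly r W H T e ∧
  Stationary r W (H \ {e 0}) ∧
  InfectsExactly r W (insert (e T) H \ {e 0}) T fun i => e (T - i)

end Bootstrap

/-- `T_r(n)`: the maximum over all initially infected `G₀ ⊆ K_n^r` of the
running time of the `K_{r+1}^r`-bootstrap process in `K_n^r`. -/
noncomputable def maxRunTime (r n : ℕ) : ℕ :=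
  sSup {t | ∃ G₀ : Finset (Finset (Fin n)),
    G₀ ⊆ (Finset.univ : Finset (Fin n)).powersetCard r ∧
    runTime r Finset.univ G₀ = t}

/-- The vertex `v_j^i` is encoded as the pair `(i, j)`; `A k i` is the set
`A_i = {v_1^i, …, v_{4k-3}^i}`. -/
def A (k i : ℕ) : Finset (ℕ × ℕ) := (Finset.Icc 1 (4 * k - 3)).image fun j => (i, j)

/-- `A_i^* = A_1 ∪ ⋯ ∪ A_i`. -/
def Astar (k i : ℕ) : Finset (ℕ × ℕ) := (Finset.Icc 1 i).biUnion (A k)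


/-- Replace the vertex `a` by the vertex `b` in every edge of `H`. -/
def relabel (a b : ℕ × ℕ) (H : Finset (Finset (ℕ × ℕ))) : Finset (Finset (ℕ × ℕ)) :=
  H.image fun f => f.image fun x => if x = a then b else x

open Classical in
/-- The gadget `r`-graph `{e ⊆ {u, v, w} ∪ em : |e| = r, {u, w} ⊄ e, em ⊄ e}`. -/
noncomputable def gadget (r : ℕ) (u v w : ℕ × ℕ) (em : Finset (ℕ × ℕ)) :
    Finset (Finset (ℕ × ℕ)) :=
  (({u, v, w} ∪ em).powersetCard r).filter fun e => ¬ {u, w} ⊆ e ∧ ¬ em ⊆ e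

/-- The glued `r`-graph `H = H₁ ∪ H₂ ∪ ⋯ ∪ H_{4k-3}`: the copies `H_{2j-1}` of
`H₁ \ {e₀}` obtained by replacing `v_1^r` by `v_{2j-1}^r`, together with the
gadgets `H_{4j-2}` (built on `e_{T₁}^-`) and `H_{4j}` (built on `e_0^-`). -/
noncomputable def glueH (r k T₁ : ℕ) (H₁ : Finset (Finset (ℕ × ℕ)))
    (e : ℕ → Finset (ℕ × ℕ)) : Finset (Finset (ℕ × ℕ)) :=
  H₁ ∪
  ((Finset.Icc 1 (2 * k - 1)).biUnion fun j =>
    relabel (r, 1) (r, 2 * j - 1) (H₁ \ {e 0})) ∪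
  ((Finset.Icc 1 (k - 1)).biUnion fun j =>
    gadget r (r, 4 * j - 3) (r, 4 * j - 2) (r, 4 * j - 1) ((e T₁).erase (r, 1))) ∪
  ((Finset.Icc 1 (k - 1)).biUnion fun j =>
    gadget r (r, 4 * j - 1) (r, 4 * j) (r, 4 * j + 1) ((e 0).erase (r, 1)))

/-- The final infected graph `H_∞` of the gluing construction. -/
noncomputable def Hinf (r k T₁ : ℕ) (H₁ : Finset (Finset (ℕ × ℕ)))
    (e : ℕ → Finset (ℕ × ℕ)) : Finset (Finset (ℕ × ℕ)) :=
  glueH r k T₁ H₁ e ∪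
  ((Finset.range (T₁ + 1)).biUnion fun i =>
    (Finset.Icc 1 (2 * k - 1)).image fun j =>
      insert (r, 2 * j - 1) ((e i).erase (r, 1))) ∪
  ((Finset.Icc 1 (k - 1)).image fun j =>
    insert (r, 4 * j - 2) ((e T₁).erase (r, 1))) ∪
  ((Finset.Icc 1 (k - 1)).image fun j =>
    insert (r, 4 * j) ((e 0).erase (r, 1)))


section Aux11
open Finset

lemma mem_A_iff {k i : ℕ} {x : ℕ × ℕ} :
    x ∈ A k i ↔ x.1 = i ∧ 1 ≤ x.2 ∧ x.2 ≤ 4 * k - 3 := by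
  constructor
  · intro hx
    simp only [A, Finset.mem_image, Finset.mem_Icc] at hx
    obtain ⟨j, hj, rfl⟩ := hx
    exact ⟨rfl, hj.1, hj.2⟩
  · rintro ⟨h1, h2, h3⟩
    simp only [A, Finset.mem_image, Finset.mem_Icc]
    exact ⟨x.2, ⟨h2, h3⟩, by rw [← h1]⟩

lemma mem_Astar_iff {k n : ℕ} {x : ℕ × ℕ} :
    x ∈ Astar k n ↔ 1 ≤ x.1 ∧ x.1 ≤ n ∧ 1 ≤ x.2 ∧ x.2 ≤ 4 * k - 3 := by
  simp only [Astar, Finset.mem_biUnion, Finset.mem_Icc, mem_A_iff]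
  constructor
  · rintro ⟨i, ⟨h1, h2⟩, hx1, h3, h4⟩
    exact ⟨hx1 ▸ h1, hx1 ▸ h2, h3, h4⟩
  · rintro ⟨h1, h2, h3, h4⟩
    exact ⟨x.1, ⟨h1, h2⟩, rfl, h3, h4⟩

lemma exists_erase_of_subset {f g : Finset (ℕ × ℕ)} {n : ℕ} (hsub : g ⊆ f)
    (hf : f.card = n + 1) (hg : g.card = n) : ∃ x ∈ f, x ∉ g ∧ g = f.erase x := by
  have h : (f \ g).card = 1 := by rw [card_sdiff_of_subset hsub]; omega
  obtain ⟨x, hx⟩ := card_eq_one.1 h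
  have hxf : x ∈ f \ g := by rw [hx]; exact mem_singleton_self x
  rw [mem_sdiff] at hxf
  refine ⟨x, hxf.1, hxf.2, ?_⟩
  refine eq_of_subset_of_card_le (fun z hz => mem_erase.2 ⟨fun h' => hxf.2 (h' ▸ hz), hsub hz⟩) ?_
  rw [card_erase_of_mem hxf.1, hf, hg]
  omega

lemma insert_rowr_inj {r m m' : ℕ} {s s' : Finset (ℕ × ℕ)} (hs : ∀ z ∈ s, z.1 ≠ r)
    (hs' : ∀ z ∈ s', z.1 ≠ r)
    (h : insert ((r : ℕ), m) s = insert ((r : ℕ), m') s') : m = m' ∧ s = s' := by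
  have hms : ((r : ℕ), m) ∉ s := fun hh => hs _ hh rfl
  have hms' : ((r : ℕ), m') ∉ s' := fun hh => hs' _ hh rfl
  have h1 : ((r : ℕ), m) ∈ insert ((r : ℕ), m') s' := h ▸ mem_insert_self _ _
  rcases mem_insert.1 h1 with h2 | h2
  · have hm : m = m' := (Prod.ext_iff.1 h2).2
    subst hm
    refine ⟨rfl, ?_⟩
    rw [← erase_insert hms, h, erase_insert hms']
  · exact absurd rfl (hs' _ h2)

lemma image_relabel_notMem {a b : ℕ × ℕ} {s : Finset (ℕ × ℕ)} (h : a ∉ s) :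
    s.image (fun x => if x = a then b else x) = s := by
  rw [Finset.image_congr (g := id), image_id]
  intro x hx
  simp only [id]
  exact if_neg (by rintro rfl; exact h hx)

lemma image_relabel_mem {a b : ℕ × ℕ} {s : Finset (ℕ × ℕ)} (h : a ∈ s) :
    s.image (fun x => if x = a then b else x) = insert b (s.erase a) := by
  conv_lhs => rw [← insert_erase h]
  rw [image_insert, if_pos rfl, image_relabel_notMem (notMem_erase a s)]

lemma mem_gadget_iff {r : ℕ} {u v w : ℕ × ℕ} {em g : Finset (ℕ × ℕ)} :
    g ∈ gadget r u v w em ↔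
      g ⊆ {u, v, w} ∪ em ∧ g.card = r ∧ ¬ {u, w} ⊆ g ∧ ¬ em ⊆ g := by
  classical
  simp [gadget, Finset.mem_filter, Finset.mem_powersetCard, and_assoc]

lemma insert_mem_gadget {r : ℕ} {u v w x y : ℕ × ℕ} {em : Finset (ℕ × ℕ)}
    (hur : u.1 = r) (hvr : v.1 = r) (hwr : w.1 = r)
    (huv : u ≠ v) (huw : u ≠ w) (hvw : v ≠ w)
    (hem : ∀ z ∈ em, z.1 ≠ r) (hcard : em.card = r - 1) (hr : 3 ≤ r)
    (hx : x = u ∨ x = w) (hy : y ∈ em) :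
    insert v (insert x (em.erase y)) ∈ gadget r u v w em := by
  have hxr : x.1 = r := by rcases hx with rfl | rfl <;> assumption
  have hvem : v ∉ em.erase y := fun h => hem _ (mem_of_mem_erase h) hvr
  have hxem : x ∉ em.erase y := fun h => hem _ (mem_of_mem_erase h) hxr
  have hvx : v ≠ x := by
    rcases hx with rfl | rfl
    · exact huv.symm
    · exact hvw
  have hvins : v ∉ insert x (em.erase y) := by
    simp only [mem_insert]
    rintro (h | h)
    · exact hvx h
    · exact hvem h
  refine mem_gadget_iff.2 ⟨?_, ?_, ?_, ?_⟩
  · intro z hz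
    simp only [mem_insert] at hz
    rcases hz with rfl | rfl | hz
    · exact mem_union_left _ (by simp)
    · rcases hx with rfl | rfl
      · exact mem_union_left _ (by simp)
      · exact mem_union_left _ (by simp)
    · exact mem_union_right _ (mem_of_mem_erase hz)
  · rw [card_insert_of_notMem hvins, card_insert_of_notMem hxem,
      card_erase_of_mem hy, hcard]
    omega
  · intro hsub
    rcases hx with rfl | rfl
    · have hw : w ∈ insert v (insert x (em.erase y)) := hsub (by simp)
      simp only [mem_insert] at hw
      rcases hw with h | h | h
      · exact hvw h.symm
      · exact huw h.symm
      · exact hem _ (mem_of_mem_erase h) hwr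
    · have hu : u ∈ insert v (insert x (em.erase y)) := hsub (by simp)
      simp only [mem_insert] at hu
      rcases hu with h | h | h
      · exact huv h
      · exact huw h
      · exact hem _ (mem_of_mem_erase h) hur
  · intro hsub
    have hyy : y ∈ insert v (insert x (em.erase y)) := hsub hy
    simp only [mem_insert] at hyy
    rcases hyy with h | h | h
    · exact hem _ hy (h ▸ hvr)
    · exact hem _ hy (h ▸ hxr)
    · exact notMem_erase _ _ h

end Aux11

section Aux11b
open Finset

lemma Hinf_elim {r k T₁ : ℕ} {H₁ : Finset (Finset (ℕ × ℕ))} {e : ℕ → Finset (ℕ × ℕ)}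
    {g : Finset (ℕ × ℕ)} {motive : Prop}
    (hg : g ∈ Hinf r k T₁ H₁ e)
    (h1 : g ∈ H₁ → motive)
    (h2 : ∀ j g', 1 ≤ j → j ≤ 2 * k - 1 → g' ∈ H₁ → g' ≠ e 0 → ((r : ℕ), (1 : ℕ)) ∈ g' →
      g = insert ((r : ℕ), 2 * j - 1) (g'.erase ((r : ℕ), (1 : ℕ))) → motive)
    (h3 : ∀ j, 1 ≤ j → j ≤ k - 1 →
      g ∈ gadget r ((r : ℕ), 4 * j - 3) ((r : ℕ), 4 * j - 2) ((r : ℕ), 4 * j - 1)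
        ((e T₁).erase ((r : ℕ), (1 : ℕ))) → motive)
    (h4 : ∀ j, 1 ≤ j → j ≤ k - 1 →
      g ∈ gadget r ((r : ℕ), 4 * j - 1) ((r : ℕ), 4 * j) ((r : ℕ), 4 * j + 1)
        ((e 0).erase ((r : ℕ), (1 : ℕ))) → motive)
    (h5 : ∀ i j, i ≤ T₁ → 1 ≤ j → j ≤ 2 * k - 1 →
      g = insert ((r : ℕ), 2 * j - 1) ((e i).erase ((r : ℕ), (1 : ℕ))) → motive)
    (h6 : ∀ j, 1 ≤ j → j ≤ k - 1 →
      g = insert ((r : ℕ), 4 * j - 2) ((e T₁).erase ((r : ℕ), (1 : ℕ))) → motive)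
    (h7 : ∀ j, 1 ≤ j → j ≤ k - 1 →
      g = insert ((r : ℕ), 4 * j) ((e 0).erase ((r : ℕ), (1 : ℕ))) → motive) : motive := by
  classical
  unfold Hinf glueH at hg
  simp only [mem_union] at hg
  rcases hg with ((((((hg | hgR) | hgGT) | hgG0) | hgB) | hgC) | hgD)
  · exact h1 hg
  · -- relabel
    obtain ⟨j, hj, hrel⟩ := mem_biUnion.1 hgR
    rw [mem_Icc] at hj
    obtain ⟨g', hg', himg⟩ := mem_image.1 hrel
    rw [mem_sdiff, mem_singleton] at hg'
    by_cases h1g : ((r : ℕ), (1 : ℕ)) ∈ g'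
    · rw [image_relabel_mem h1g] at himg
      exact h2 j g' hj.1 hj.2 hg'.1 hg'.2 h1g himg.symm
    · rw [image_relabel_notMem h1g] at himg
      exact h1 (himg ▸ hg'.1)
  · obtain ⟨j, hj, hmem⟩ := mem_biUnion.1 hgGT
    rw [mem_Icc] at hj
    exact h3 j hj.1 hj.2 hmem
  · obtain ⟨j, hj, hmem⟩ := mem_biUnion.1 hgG0
    rw [mem_Icc] at hj
    exact h4 j hj.1 hj.2 hmem
  · obtain ⟨i, hi, hmem⟩ := mem_biUnion.1 hgB
    obtain ⟨j, hj, heq⟩ := mem_image.1 hmem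
    rw [mem_Icc] at hj
    exact h5 i j (Nat.lt_succ_iff.1 (Finset.mem_range.1 hi)) hj.1 hj.2 heq.symm
  · obtain ⟨j, hj, heq⟩ := mem_image.1 hgC
    rw [mem_Icc] at hj
    exact h6 j hj.1 hj.2 heq.symm
  · obtain ⟨j, hj, heq⟩ := mem_image.1 hgD
    rw [mem_Icc] at hj
    exact h7 j hj.1 hj.2 heq.symm

lemma bootIter_of_seq {r T : ℕ} {W : Finset (ℕ × ℕ)} {H : Finset (Finset (ℕ × ℕ))}
    {e : ℕ → Finset (ℕ × ℕ)} (h0 : e 0 ∈ H) (hI : InfectsExactly r W H T e) :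
    ∀ i ≤ T, bootIter r W H i = H ∪ (Finset.range (i + 1)).image e := by
  intro i
  induction i with
  | zero =>
    intro _
    show H = H ∪ (Finset.range 1).image e
    rw [Finset.range_one, Finset.image_singleton]
    exact (union_eq_left.2 (singleton_subset_iff.2 h0)).symm
  | succ n ih =>
    intro hle
    have h := (hI.1 (n + 1) (by omega) hle).2
    simp only [Nat.add_sub_cancel] at h
    rw [h, ih (by omega),
      show Finset.range (n + 1 + 1) = insert (n + 1) (Finset.range (n + 1)) from
        Finset.range_add_one,
      Finset.image_insert, Finset.union_insert]

lemma stationary_of_seq {r T : ℕ} {W : Finset (ℕ × ℕ)} {H : Finset (Finset (ℕ × ℕ))}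
    {e : ℕ → Finset (ℕ × ℕ)} (h0 : e 0 ∈ H) (hI : InfectsExactly r W H T e) :
    Stationary r W (H ∪ (Finset.range (T + 1)).image e) := by
  have h1 := bootIter_of_seq h0 hI T le_rfl
  show bootStep r W _ = _
  rw [← h1]
  have h2 : bootStep r W (bootIter r W H T) = bootIter r W H (T + 1) := rfl
  rw [h2, hI.2]

lemma stationary_no_singleton {r : ℕ} {W : Finset (ℕ × ℕ)} {G : Finset (Finset (ℕ × ℕ))}
    {f e₀ : Finset (ℕ × ℕ)} (hS : Stationary r W G) (hf : f ⊆ W) (hcard : f.card = r + 1) :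
    f.powersetCard r \ G ≠ {e₀} := by
  classical
  intro h
  have he : e₀ ∈ f.powersetCard r \ G := by rw [h]; exact mem_singleton_self _
  rw [mem_sdiff, mem_powersetCard] at he
  obtain ⟨⟨hsub, hc⟩, hnG⟩ := he
  have hmem : e₀ ∈ bootStep r W G := by
    unfold bootStep
    rw [mem_union]
    right
    simp only [Finset.mem_filter]
    exact ⟨mem_powersetCard.2 ⟨hsub.trans hf, hc⟩, ⟨f, mem_powersetCard.2 ⟨hf, hcard⟩, h⟩⟩
  have hS' : bootStep r W G = G := hS
  rw [hS'] at hmem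
  exact hnG hmem

lemma transfer_singleton {r : ℕ} {G G₁ : Finset (Finset (ℕ × ℕ))} {f f' e₀ : Finset (ℕ × ℕ)}
    (ψ φ : Finset (ℕ × ℕ) → Finset (ℕ × ℕ))
    (hψ : ∀ g, g ⊆ f → g.card = r → ψ g ⊆ f' ∧ (ψ g).card = r ∧ (g ∈ G ↔ ψ g ∈ G₁))
    (hφ : ∀ g', g' ⊆ f' → g'.card = r → φ g' ⊆ f ∧ (φ g').card = r ∧ ψ (φ g') = g')
    (hdiff : f.powersetCard r \ G = {e₀}) :
    f'.powersetCard r \ G₁ = {ψ e₀} := by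
  classical
  have he₀ : e₀ ∈ f.powersetCard r \ G := by rw [hdiff]; exact mem_singleton_self _
  rw [mem_sdiff, mem_powersetCard] at he₀
  obtain ⟨⟨hsub, hc⟩, hnG⟩ := he₀
  obtain ⟨hψs, hψc, hψm⟩ := hψ e₀ hsub hc
  ext g'
  simp only [mem_sdiff, mem_powersetCard, mem_singleton]
  constructor
  · rintro ⟨⟨hg's, hg'c⟩, hg'n⟩
    obtain ⟨hφs, hφc, hφψ⟩ := hφ g' hg's hg'c
    obtain ⟨-, -, hm⟩ := hψ (φ g') hφs hφc
    have hmem : φ g' ∈ f.powersetCard r \ G := by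
      rw [mem_sdiff, mem_powersetCard]
      exact ⟨⟨hφs, hφc⟩, fun hmem => hg'n (hφψ ▸ hm.1 hmem)⟩
    rw [hdiff, mem_singleton] at hmem
    rw [← hφψ, hmem]
  · rintro rfl
    exact ⟨⟨hψs, hψc⟩, fun hmem => hnG (hψm.2 hmem)⟩

end Aux11b
/-- under the hypotheses of the gluing construction, the
`F_r`-bootstrap process on the complete `r`-graph on `V(H) = A_r^*` with
initially infected graph `H_∞` is stationary. -/
theorem stmt11 (r k T₁ : ℕ) (hr : 3 ≤ r) (hk : 2 ≤ k) (hT₁ : 2 ≤ T₁)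
    (H₁ : Finset (Finset (ℕ × ℕ))) (e : ℕ → Finset (ℕ × ℕ))
    (hH₁edges : H₁ ⊆ (Astar k (r - 1) ∪ {((r : ℕ), (1 : ℕ))}).powersetCard r)
    (hH₁vertices : ∀ x ∈ Astar k (r - 1) ∪ {((r : ℕ), (1 : ℕ))}, ∃ f ∈ H₁, x ∈ f)
    (hseq : IsSequential r (Astar k (r - 1) ∪ {((r : ℕ), (1 : ℕ))}) H₁ T₁ e)
    (hv : ∀ i ≤ T₁, ((r : ℕ), (1 : ℕ)) ∈ e i) :
    Stationary r (Astar k r) (Hinf r k T₁ H₁ e) := by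
  classical
  obtain ⟨he0H, heprop, hIE, -, -⟩ := hseq
  have hW₁row : ∀ x ∈ Astar k (r - 1) ∪ {((r : ℕ), (1 : ℕ))}, x.1 = r →
      x = ((r : ℕ), (1 : ℕ)) := by
    intro x hx hxr
    rcases mem_union.1 hx with h | h
    · exact absurd hxr (by have := mem_Astar_iff.1 h; omega)
    · exact mem_singleton.1 h
  have hEmrow : ∀ i, i ≤ T₁ → ∀ z ∈ (e i).erase ((r : ℕ), (1 : ℕ)), z.1 ≠ r := by
    intro i hi z hz hzr
    rw [mem_erase] at hz
    exact hz.1 (hW₁row z ((heprop i hi).1 hz.2) hzr)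
  have hEmcard : ∀ i, i ≤ T₁ → ((e i).erase ((r : ℕ), (1 : ℕ))).card = r - 1 := by
    intro i hi
    rw [card_erase_of_mem (hv i hi), (heprop i hi).2]
  have hEmins : ∀ i, i ≤ T₁ →
      insert ((r : ℕ), (1 : ℕ)) ((e i).erase ((r : ℕ), (1 : ℕ))) = e i :=
    fun i hi => insert_erase (hv i hi)
  have hH₁row : ∀ g ∈ H₁, ∀ z ∈ g, z.1 = r → z = ((r : ℕ), (1 : ℕ)) := by
    intro g hg z hz hzr
    exact hW₁row z ((mem_powersetCard.1 (hH₁edges hg)).1 hz) hzr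
  have hG₁stat : Stationary r (Astar k (r - 1) ∪ {((r : ℕ), (1 : ℕ))})
      (H₁ ∪ (Finset.range (T₁ + 1)).image e) := stationary_of_seq he0H hIE
  -- membership constructors
  have hH₁Hinf : ∀ g ∈ H₁, g ∈ Hinf r k T₁ H₁ e := by
    intro g hg
    unfold Hinf glueH
    simp only [mem_union]
    tauto
  have hB_mem : ∀ i, i ≤ T₁ → ∀ j, 1 ≤ j → j ≤ 2 * k - 1 →
      insert ((r : ℕ), 2 * j - 1) ((e i).erase ((r : ℕ), (1 : ℕ))) ∈ Hinf r k T₁ H₁ e := by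
    intro i hi j hj1 hj2
    unfold Hinf
    simp only [mem_union]
    left; left; right
    exact mem_biUnion.2 ⟨i, mem_range.2 (by omega),
      mem_image.2 ⟨j, mem_Icc.2 ⟨hj1, hj2⟩, rfl⟩⟩
  have hC_mem : ∀ j, 1 ≤ j → j ≤ k - 1 →
      insert ((r : ℕ), 4 * j - 2) ((e T₁).erase ((r : ℕ), (1 : ℕ))) ∈ Hinf r k T₁ H₁ e := by
    intro j hj1 hj2
    unfold Hinf
    simp only [mem_union]
    left; right
    exact mem_image.2 ⟨j, mem_Icc.2 ⟨hj1, hj2⟩, rfl⟩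
  have hD_mem : ∀ j, 1 ≤ j → j ≤ k - 1 →
      insert ((r : ℕ), 4 * j) ((e 0).erase ((r : ℕ), (1 : ℕ))) ∈ Hinf r k T₁ H₁ e := by
    intro j hj1 hj2
    unfold Hinf
    simp only [mem_union]
    right
    exact mem_image.2 ⟨j, mem_Icc.2 ⟨hj1, hj2⟩, rfl⟩
  have hGT_mem : ∀ j, 1 ≤ j → j ≤ k - 1 → ∀ g,
      g ∈ gadget r ((r : ℕ), 4 * j - 3) ((r : ℕ), 4 * j - 2) ((r : ℕ), 4 * j - 1)
        ((e T₁).erase ((r : ℕ), (1 : ℕ))) → g ∈ Hinf r k T₁ H₁ e := by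
    intro j hj1 hj2 g hg
    unfold Hinf glueH
    simp only [mem_union]
    left; left; left; left; right
    exact mem_biUnion.2 ⟨j, mem_Icc.2 ⟨hj1, hj2⟩, hg⟩
  have hG0_mem : ∀ j, 1 ≤ j → j ≤ k - 1 → ∀ g,
      g ∈ gadget r ((r : ℕ), 4 * j - 1) ((r : ℕ), 4 * j) ((r : ℕ), 4 * j + 1)
        ((e 0).erase ((r : ℕ), (1 : ℕ))) → g ∈ Hinf r k T₁ H₁ e := by
    intro j hj1 hj2 g hg
    unfold Hinf glueH
    simp only [mem_union]
    left; left; left; right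
    exact mem_biUnion.2 ⟨j, mem_Icc.2 ⟨hj1, hj2⟩, hg⟩
  have hRel_mem : ∀ j, 1 ≤ j → j ≤ 2 * k - 1 → ∀ g' ∈ H₁, g' ≠ e 0 →
      g'.image (fun x => if x = ((r : ℕ), (1 : ℕ)) then ((r : ℕ), 2 * j - 1) else x)
        ∈ Hinf r k T₁ H₁ e := by
    intro j hj1 hj2 g' hg' hne
    unfold Hinf glueH
    simp only [mem_union]
    left; left; left; left; left; right
    refine mem_biUnion.2 ⟨j, mem_Icc.2 ⟨hj1, hj2⟩, ?_⟩
    unfold relabel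
    exact mem_image.2 ⟨g', mem_sdiff.2 ⟨hg', by simp [hne]⟩, rfl⟩
  -- helper: a set with a single row-r vertex is not in a gadget
  have hNoGad : ∀ (m : ℕ) (s : Finset (ℕ × ℕ)) (u v w : ℕ × ℕ) (em : Finset (ℕ × ℕ)),
      (∀ z ∈ s, z.1 ≠ r) → u.1 = r → v.1 = r → w.1 = r → em.card = r - 1 →
      insert ((r : ℕ), m) s ∈ gadget r u v w em → False := by
    intro m s u v w em hs hur hvr hwr hemc hmem
    obtain ⟨hsub, hcard, hnuw, hnem⟩ := mem_gadget_iff.1 hmem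
    have hssub : s ⊆ em := by
      intro z hz
      rcases mem_union.1 (hsub (mem_insert_of_mem hz)) with h | h
      · exfalso
        simp only [mem_insert, mem_singleton] at h
        rcases h with rfl | rfl | rfl
        · exact hs _ hz hur
        · exact hs _ hz hvr
        · exact hs _ hz hwr
      · exact h
    have hms : ((r : ℕ), m) ∉ s := fun h => hs _ h rfl
    rw [card_insert_of_notMem hms] at hcard
    have hseq2 : s = em := eq_of_subset_of_card_le hssub (by omega)
    exact hnem (by rw [← hseq2]; exact subset_insert _ _)
  have hins : ∀ (mm pp : ℕ) (s : Finset (ℕ × ℕ)), (∀ z ∈ s, z.1 ≠ r) →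
      ((r : ℕ), pp) ∈ insert ((r : ℕ), mm) s → pp = mm := by
    intro mm pp s hs h
    rcases mem_insert.1 h with h | h
    · exact (Prod.ext_iff.1 h).2
    · exact absurd rfl (hs _ h)
  have hgadrow : ∀ (g : Finset (ℕ × ℕ)) (u v w : ℕ × ℕ) (em : Finset (ℕ × ℕ)),
      (∀ z ∈ em, z.1 ≠ r) → g ⊆ {u, v, w} ∪ em → ∀ z ∈ g, z.1 = r →
      z = u ∨ z = v ∨ z = w := by
    intro g u v w em hem hsub z hz hzr
    rcases mem_union.1 (hsub hz) with h | h
    · simpa [mem_insert, mem_singleton] using h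
    · exact absurd hzr (hem _ h)
  -- CC0 : edges with no row-r vertex are exactly the H₁-edges
  have hCC0 : ∀ g, g ∈ Hinf r k T₁ H₁ e → (∀ z ∈ g, z.1 ≠ r) → g ∈ H₁ := by
    intro g hg hrow
    refine Hinf_elim hg (fun h => h) ?_ ?_ ?_ ?_ ?_ ?_
    · intro j g' hj1 hj2 hg' hne h1g' heq
      exact absurd rfl (hrow _ (by rw [heq]; exact mem_insert_self _ _))
    · intro j hj1 hj2 hmem
      obtain ⟨hsub, hcard, -, -⟩ := mem_gadget_iff.1 hmem
      have hgem : g ⊆ (e T₁).erase ((r : ℕ), (1 : ℕ)) := by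
        intro z hz
        rcases mem_union.1 (hsub hz) with h | h
        · exfalso
          simp only [mem_insert, mem_singleton] at h
          rcases h with rfl | rfl | rfl <;> exact hrow _ hz rfl
        · exact h
      have h1 := card_le_card hgem
      have h2 := hEmcard T₁ le_rfl
      omega
    · intro j hj1 hj2 hmem
      obtain ⟨hsub, hcard, -, -⟩ := mem_gadget_iff.1 hmem
      have hgem : g ⊆ (e 0).erase ((r : ℕ), (1 : ℕ)) := by
        intro z hz
        rcases mem_union.1 (hsub hz) with h | h
        · exfalso
          simp only [mem_insert, mem_singleton] at h
          rcases h with rfl | rfl | rfl <;> exact hrow _ hz rfl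
        · exact h
      have h1 := card_le_card hgem
      have h2 := hEmcard 0 (by omega)
      omega
    · intro i j hi hj1 hj2 heq
      exact absurd rfl (hrow _ (by rw [heq]; exact mem_insert_self _ _))
    · intro j hj1 hj2 heq
      exact absurd rfl (hrow _ (by rw [heq]; exact mem_insert_self _ _))
    · intro j hj1 hj2 heq
      exact absurd rfl (hrow _ (by rw [heq]; exact mem_insert_self _ _))
  -- odd forward
  have hCCoddF : ∀ (m : ℕ) (s : Finset (ℕ × ℕ)), m % 2 = 1 → (∀ z ∈ s, z.1 ≠ r) →
      insert ((r : ℕ), m) s ∈ Hinf r k T₁ H₁ e →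
      insert ((r : ℕ), (1 : ℕ)) s ∈ H₁ ∪ (Finset.range (T₁ + 1)).image e := by
    intro m s hm hs hg
    refine Hinf_elim hg ?_ ?_ ?_ ?_ ?_ ?_ ?_
    · intro hgH
      have h1 : ((r : ℕ), m) = ((r : ℕ), (1 : ℕ)) :=
        hH₁row _ hgH _ (mem_insert_self _ _) rfl
      rw [h1] at hgH
      exact mem_union_left _ hgH
    · intro j g' hj1 hj2 hg' hne h1g' heq
      have herow : ∀ z ∈ g'.erase ((r : ℕ), (1 : ℕ)), z.1 ≠ r := by
        intro z hz hzr
        exact (mem_erase.1 hz).1 (hH₁row _ hg' _ (mem_erase.1 hz).2 hzr)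
      obtain ⟨hmm, hss⟩ := insert_rowr_inj hs herow heq
      rw [hss, insert_erase h1g']
      exact mem_union_left _ hg'
    · intro j hj1 hj2 hmem
      exact absurd hmem (fun h => hNoGad m s _ _ _ _ hs rfl rfl rfl
        (hEmcard T₁ le_rfl) h)
    · intro j hj1 hj2 hmem
      exact absurd hmem (fun h => hNoGad m s _ _ _ _ hs rfl rfl rfl
        (hEmcard 0 (by omega)) h)
    · intro i j hi hj1 hj2 heq
      obtain ⟨hmm, hss⟩ := insert_rowr_inj hs (hEmrow i hi) heq
      rw [hss, hEmins i hi]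
      exact mem_union_right _ (mem_image.2 ⟨i, mem_range.2 (by omega), rfl⟩)
    · intro j hj1 hj2 heq
      obtain ⟨hmm, -⟩ := insert_rowr_inj hs (hEmrow T₁ le_rfl) heq
      omega
    · intro j hj1 hj2 heq
      obtain ⟨hmm, -⟩ := insert_rowr_inj hs (hEmrow 0 (by omega)) heq
      omega
  -- odd backward
  have hCCoddB : ∀ (m : ℕ) (s : Finset (ℕ × ℕ)), m % 2 = 1 → m ≤ 4 * k - 3 →
      (∀ z ∈ s, z.1 ≠ r) →
      insert ((r : ℕ), (1 : ℕ)) s ∈ H₁ ∪ (Finset.range (T₁ + 1)).image e →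
      insert ((r : ℕ), m) s ∈ Hinf r k T₁ H₁ e := by
    intro m s hm hmk hs hmem
    have hs1 : ((r : ℕ), (1 : ℕ)) ∉ s := fun h => hs _ h rfl
    rcases mem_union.1 hmem with hg | hg
    · by_cases h0 : insert ((r : ℕ), (1 : ℕ)) s = e 0
      · have hseq0 : s = (e 0).erase ((r : ℕ), (1 : ℕ)) := by
          rw [← h0, erase_insert hs1]
        rw [hseq0]
        have hmm : m = 2 * ((m + 1) / 2) - 1 := by omega
        rw [hmm]
        exact hB_mem 0 (by omega) _ (by omega) (by omega)
      · have himg := image_relabel_mem (b := ((r : ℕ), 2 * ((m + 1) / 2) - 1))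
          (mem_insert_self ((r : ℕ), (1 : ℕ)) s)
        rw [erase_insert hs1] at himg
        have hh := hRel_mem ((m + 1) / 2) (by omega) (by omega) _ hg h0
        rw [himg] at hh
        have hmm : 2 * ((m + 1) / 2) - 1 = m := by omega
        rw [hmm] at hh
        exact hh
    · obtain ⟨i, hi, heq⟩ := mem_image.1 hg
      have hi' : i ≤ T₁ := by have := mem_range.1 hi; omega
      have hseqi : s = (e i).erase ((r : ℕ), (1 : ℕ)) := by
        rw [heq, erase_insert hs1]
      rw [hseqi]
      have hmm : m = 2 * ((m + 1) / 2) - 1 := by omega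
      rw [hmm]
      exact hB_mem i hi' _ (by omega) (by omega)
  -- even
  have hCCeven : ∀ (m : ℕ) (s : Finset (ℕ × ℕ)), m % 2 = 0 → (∀ z ∈ s, z.1 ≠ r) →
      insert ((r : ℕ), m) s ∈ Hinf r k T₁ H₁ e →
      (m % 4 = 2 ∧ s = (e T₁).erase ((r : ℕ), (1 : ℕ))) ∨
      (m % 4 = 0 ∧ s = (e 0).erase ((r : ℕ), (1 : ℕ))) := by
    intro m s hm hs hg
    refine Hinf_elim hg ?_ ?_ ?_ ?_ ?_ ?_ ?_
    · intro hgH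
      have h1 : ((r : ℕ), m) = ((r : ℕ), (1 : ℕ)) :=
        hH₁row _ hgH _ (mem_insert_self _ _) rfl
      have := (Prod.ext_iff.1 h1).2
      omega
    · intro j g' hj1 hj2 hg' hne h1g' heq
      have herow : ∀ z ∈ g'.erase ((r : ℕ), (1 : ℕ)), z.1 ≠ r := by
        intro z hz hzr
        exact (mem_erase.1 hz).1 (hH₁row _ hg' _ (mem_erase.1 hz).2 hzr)
      obtain ⟨hmm, -⟩ := insert_rowr_inj hs herow heq
      omega
    · intro j hj1 hj2 hmem
      exact absurd hmem (fun h => hNoGad m s _ _ _ _ hs rfl rfl rfl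
        (hEmcard T₁ le_rfl) h)
    · intro j hj1 hj2 hmem
      exact absurd hmem (fun h => hNoGad m s _ _ _ _ hs rfl rfl rfl
        (hEmcard 0 (by omega)) h)
    · intro i j hi hj1 hj2 heq
      obtain ⟨hmm, -⟩ := insert_rowr_inj hs (hEmrow i hi) heq
      omega
    · intro j hj1 hj2 heq
      obtain ⟨hmm, hss⟩ := insert_rowr_inj hs (hEmrow T₁ le_rfl) heq
      exact Or.inl ⟨by omega, hss⟩
    · intro j hj1 hj2 heq
      obtain ⟨hmm, hss⟩ := insert_rowr_inj hs (hEmrow 0 (by omega)) heq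
      exact Or.inr ⟨by omega, hss⟩
  -- presence of single-row-r edges
  have hPresT : ∀ m, 1 ≤ m → m ≤ 4 * k - 3 → m % 4 ≠ 0 →
      insert ((r : ℕ), m) ((e T₁).erase ((r : ℕ), (1 : ℕ))) ∈ Hinf r k T₁ H₁ e := by
    intro m h1 h2 h4
    rcases Nat.even_or_odd m with he | ho
    · rw [Nat.even_iff] at he
      have hmm : m = 4 * ((m + 2) / 4) - 2 := by omega
      rw [hmm]
      exact hC_mem _ (by omega) (by omega)
    · rw [Nat.odd_iff] at ho
      have hmm : m = 2 * ((m + 1) / 2) - 1 := by omega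
      rw [hmm]
      exact hB_mem T₁ le_rfl _ (by omega) (by omega)
  have hPres0 : ∀ m, 1 ≤ m → m ≤ 4 * k - 3 → m % 4 ≠ 2 →
      insert ((r : ℕ), m) ((e 0).erase ((r : ℕ), (1 : ℕ))) ∈ Hinf r k T₁ H₁ e := by
    intro m h1 h2 h4
    rcases Nat.even_or_odd m with he | ho
    · rw [Nat.even_iff] at he
      have hmm : m = 4 * (m / 4) := by omega
      rw [hmm]
      exact hD_mem _ (by omega) (by omega)
    · rw [Nat.odd_iff] at ho
      have hmm : m = 2 * ((m + 1) / 2) - 1 := by omega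
      rw [hmm]
      exact hB_mem 0 (by omega) _ (by omega) (by omega)
  -- pair characterizations
  have hCC2consec : ∀ g z₁ z₂, g ∈ Hinf r k T₁ H₁ e → z₁ ∈ g → z₂ ∈ g →
      z₁.1 = r → z₂.1 = r → z₁ ≠ z₂ → z₂.2 = z₁.2 + 1 ∨ z₁.2 = z₂.2 + 1 := by
    intro g z₁ z₂ hg hm₁ hm₂ h1r h2r hne
    have e₁ : ((r : ℕ), z₁.2) = z₁ := by rw [← h1r]
    have e₂ : ((r : ℕ), z₂.2) = z₂ := by rw [← h2r]
    have hpairins : ∀ (mm : ℕ) (s : Finset (ℕ × ℕ)), (∀ z ∈ s, z.1 ≠ r) →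
        g = insert ((r : ℕ), mm) s → False := by
      intro mm s hsr heq
      rw [heq] at hm₁ hm₂
      have v₁ : z₁.2 = mm := hins mm z₁.2 s hsr (by rw [e₁]; exact hm₁)
      have v₂ : z₂.2 = mm := hins mm z₂.2 s hsr (by rw [e₂]; exact hm₂)
      exact hne (by rw [← e₁, ← e₂, v₁, v₂])
    refine Hinf_elim hg ?_ ?_ ?_ ?_ ?_ ?_ ?_
    · intro hgH
      exact absurd ((hH₁row _ hgH _ hm₁ h1r).trans (hH₁row _ hgH _ hm₂ h2r).symm) hne
    · intro j g' hj1 hj2 hg' hne' h1g' heq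
      exact absurd (hpairins (2 * j - 1) _ (fun z hz hzr =>
        (mem_erase.1 hz).1 (hH₁row _ hg' _ (mem_erase.1 hz).2 hzr)) heq) id
    · intro j hj1 hj2 hmem
      obtain ⟨hsub, -, hnuw, -⟩ := mem_gadget_iff.1 hmem
      have hnuw' : ¬(((r : ℕ), 4 * j - 3) ∈ g ∧ ((r : ℕ), 4 * j - 1) ∈ g) := by
        intro hh
        exact hnuw (by rw [insert_subset_iff, singleton_subset_iff]; exact hh)
      have h₁ := hgadrow g _ _ _ _ (hEmrow T₁ le_rfl) hsub z₁ hm₁ h1r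
      have h₂ := hgadrow g _ _ _ _ (hEmrow T₁ le_rfl) hsub z₂ hm₂ h2r
      rcases h₁ with rfl | rfl | rfl <;> rcases h₂ with rfl | rfl | rfl <;>
        first
          | exact absurd rfl hne
          | exact (hnuw' ⟨hm₁, hm₂⟩).elim
          | exact (hnuw' ⟨hm₂, hm₁⟩).elim
          | omega
    · intro j hj1 hj2 hmem
      obtain ⟨hsub, -, hnuw, -⟩ := mem_gadget_iff.1 hmem
      have hnuw' : ¬(((r : ℕ), 4 * j - 1) ∈ g ∧ ((r : ℕ), 4 * j + 1) ∈ g) := by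
        intro hh
        exact hnuw (by rw [insert_subset_iff, singleton_subset_iff]; exact hh)
      have h₁ := hgadrow g _ _ _ _ (hEmrow 0 (by omega)) hsub z₁ hm₁ h1r
      have h₂ := hgadrow g _ _ _ _ (hEmrow 0 (by omega)) hsub z₂ hm₂ h2r
      rcases h₁ with rfl | rfl | rfl <;> rcases h₂ with rfl | rfl | rfl <;>
        first
          | exact absurd rfl hne
          | exact (hnuw' ⟨hm₁, hm₂⟩).elim
          | exact (hnuw' ⟨hm₂, hm₁⟩).elim
          | omega
    · intro i j hi hj1 hj2 heq
      exact absurd (hpairins (2 * j - 1) _ (hEmrow i hi) heq) id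
    · intro j hj1 hj2 heq
      exact absurd (hpairins (4 * j - 2) _ (hEmrow T₁ le_rfl) heq) id
    · intro j hj1 hj2 heq
      exact absurd (hpairins (4 * j) _ (hEmrow 0 (by omega)) heq) id
  have hCC2em : ∀ g z₁ z₂, g ∈ Hinf r k T₁ H₁ e → z₁ ∈ g → z₂ ∈ g →
      z₁.1 = r → z₂.1 = r → z₂.2 = z₁.2 + 1 → ∀ z ∈ g, z.1 ≠ r →
      z ∈ (if z₁.2 % 4 = 1 ∨ z₁.2 % 4 = 2 then (e T₁).erase ((r : ℕ), (1 : ℕ))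
        else (e 0).erase ((r : ℕ), (1 : ℕ))) := by
    intro g z₁ z₂ hg hm₁ hm₂ h1r h2r hq z hz hzr
    have e₁ : ((r : ℕ), z₁.2) = z₁ := by rw [← h1r]
    have e₂ : ((r : ℕ), z₂.2) = z₂ := by rw [← h2r]
    have hpairins : ∀ (mm : ℕ) (s : Finset (ℕ × ℕ)), (∀ z ∈ s, z.1 ≠ r) →
        g = insert ((r : ℕ), mm) s → False := by
      intro mm s hsr heq
      rw [heq] at hm₁ hm₂
      have v₁ : z₁.2 = mm := hins mm z₁.2 s hsr (by rw [e₁]; exact hm₁)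
      have v₂ : z₂.2 = mm := hins mm z₂.2 s hsr (by rw [e₂]; exact hm₂)
      omega
    refine Hinf_elim hg ?_ ?_ ?_ ?_ ?_ ?_ ?_
    · intro hgH
      have v₁ := (Prod.ext_iff.1 (hH₁row _ hgH _ hm₁ h1r)).2
      have v₂ := (Prod.ext_iff.1 (hH₁row _ hgH _ hm₂ h2r)).2
      omega
    · intro j g' hj1 hj2 hg' hne' h1g' heq
      exact absurd (hpairins (2 * j - 1) _ (fun z' hz' hzr' =>
        (mem_erase.1 hz').1 (hH₁row _ hg' _ (mem_erase.1 hz').2 hzr')) heq) id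
    · intro j hj1 hj2 hmem
      obtain ⟨hsub, -, -, -⟩ := mem_gadget_iff.1 hmem
      have hzem : z ∈ (e T₁).erase ((r : ℕ), (1 : ℕ)) := by
        rcases mem_union.1 (hsub hz) with h | h
        · exfalso
          simp only [mem_insert, mem_singleton] at h
          rcases h with rfl | rfl | rfl <;> exact hzr rfl
        · exact h
      have h₁ := hgadrow g _ _ _ _ (hEmrow T₁ le_rfl) hsub z₁ hm₁ h1r
      have h₂ := hgadrow g _ _ _ _ (hEmrow T₁ le_rfl) hsub z₂ hm₂ h2r
      rcases h₁ with rfl | rfl | rfl <;> rcases h₂ with rfl | rfl | rfl <;>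
        first
          | omega
          | (rw [if_pos (by omega)]; exact hzem)
    · intro j hj1 hj2 hmem
      obtain ⟨hsub, -, -, -⟩ := mem_gadget_iff.1 hmem
      have hzem : z ∈ (e 0).erase ((r : ℕ), (1 : ℕ)) := by
        rcases mem_union.1 (hsub hz) with h | h
        · exfalso
          simp only [mem_insert, mem_singleton] at h
          rcases h with rfl | rfl | rfl <;> exact hzr rfl
        · exact h
      have h₁ := hgadrow g _ _ _ _ (hEmrow 0 (by omega)) hsub z₁ hm₁ h1r
      have h₂ := hgadrow g _ _ _ _ (hEmrow 0 (by omega)) hsub z₂ hm₂ h2r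
      rcases h₁ with rfl | rfl | rfl <;> rcases h₂ with rfl | rfl | rfl <;>
        first
          | omega
          | (rw [if_neg (by omega)]; exact hzem)
    · intro i j hi hj1 hj2 heq
      exact absurd (hpairins (2 * j - 1) _ (hEmrow i hi) heq) id
    · intro j hj1 hj2 heq
      exact absurd (hpairins (4 * j - 2) _ (hEmrow T₁ le_rfl) heq) id
    · intro j hj1 hj2 heq
      exact absurd (hpairins (4 * j) _ (hEmrow 0 (by omega)) heq) id
  have hCC3 : ∀ g z₁ z₂ z₃, g ∈ Hinf r k T₁ H₁ e → z₁ ∈ g → z₂ ∈ g → z₃ ∈ g →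
      z₁.1 = r → z₂.1 = r → z₃.1 = r → z₁ ≠ z₂ → z₁ ≠ z₃ → z₂ ≠ z₃ → False := by
    intro g z₁ z₂ z₃ hg hm₁ hm₂ hm₃ h1r h2r h3r hne₁₂ hne₁₃ hne₂₃
    have e₁ : ((r : ℕ), z₁.2) = z₁ := by rw [← h1r]
    have e₂ : ((r : ℕ), z₂.2) = z₂ := by rw [← h2r]
    have hpairins : ∀ (mm : ℕ) (s : Finset (ℕ × ℕ)), (∀ z ∈ s, z.1 ≠ r) →
        g = insert ((r : ℕ), mm) s → False := by
      intro mm s hsr heq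
      rw [heq] at hm₁ hm₂
      have v₁ : z₁.2 = mm := hins mm z₁.2 s hsr (by rw [e₁]; exact hm₁)
      have v₂ : z₂.2 = mm := hins mm z₂.2 s hsr (by rw [e₂]; exact hm₂)
      exact hne₁₂ (by rw [← e₁, ← e₂, v₁, v₂])
    refine Hinf_elim hg ?_ ?_ ?_ ?_ ?_ ?_ ?_
    · intro hgH
      exact hne₁₂ ((hH₁row _ hgH _ hm₁ h1r).trans (hH₁row _ hgH _ hm₂ h2r).symm)
    · intro j g' hj1 hj2 hg' hne' h1g' heq
      exact hpairins (2 * j - 1) _ (fun z' hz' hzr' =>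
        (mem_erase.1 hz').1 (hH₁row _ hg' _ (mem_erase.1 hz').2 hzr')) heq
    · intro j hj1 hj2 hmem
      obtain ⟨hsub, -, hnuw, -⟩ := mem_gadget_iff.1 hmem
      have hnuw' : ¬(((r : ℕ), 4 * j - 3) ∈ g ∧ ((r : ℕ), 4 * j - 1) ∈ g) := by
        intro hh
        exact hnuw (by rw [insert_subset_iff, singleton_subset_iff]; exact hh)
      have h₁ := hgadrow g _ _ _ _ (hEmrow T₁ le_rfl) hsub z₁ hm₁ h1r
      have h₂ := hgadrow g _ _ _ _ (hEmrow T₁ le_rfl) hsub z₂ hm₂ h2r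
      have h₃ := hgadrow g _ _ _ _ (hEmrow T₁ le_rfl) hsub z₃ hm₃ h3r
      rcases h₁ with rfl | rfl | rfl <;> rcases h₂ with rfl | rfl | rfl <;>
        rcases h₃ with rfl | rfl | rfl <;>
        first
          | exact hne₁₂ rfl
          | exact hne₁₃ rfl
          | exact hne₂₃ rfl
          | exact (hnuw' ⟨hm₁, hm₂⟩).elim
          | exact (hnuw' ⟨hm₁, hm₃⟩).elim
          | exact (hnuw' ⟨hm₂, hm₁⟩).elim
          | exact (hnuw' ⟨hm₂, hm₃⟩).elim
          | exact (hnuw' ⟨hm₃, hm₁⟩).elim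
          | exact (hnuw' ⟨hm₃, hm₂⟩).elim
    · intro j hj1 hj2 hmem
      obtain ⟨hsub, -, hnuw, -⟩ := mem_gadget_iff.1 hmem
      have hnuw' : ¬(((r : ℕ), 4 * j - 1) ∈ g ∧ ((r : ℕ), 4 * j + 1) ∈ g) := by
        intro hh
        exact hnuw (by rw [insert_subset_iff, singleton_subset_iff]; exact hh)
      have h₁ := hgadrow g _ _ _ _ (hEmrow 0 (by omega)) hsub z₁ hm₁ h1r
      have h₂ := hgadrow g _ _ _ _ (hEmrow 0 (by omega)) hsub z₂ hm₂ h2r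
      have h₃ := hgadrow g _ _ _ _ (hEmrow 0 (by omega)) hsub z₃ hm₃ h3r
      rcases h₁ with rfl | rfl | rfl <;> rcases h₂ with rfl | rfl | rfl <;>
        rcases h₃ with rfl | rfl | rfl <;>
        first
          | exact hne₁₂ rfl
          | exact hne₁₃ rfl
          | exact hne₂₃ rfl
          | exact (hnuw' ⟨hm₁, hm₂⟩).elim
          | exact (hnuw' ⟨hm₁, hm₃⟩).elim
          | exact (hnuw' ⟨hm₂, hm₁⟩).elim
          | exact (hnuw' ⟨hm₂, hm₃⟩).elim
          | exact (hnuw' ⟨hm₃, hm₁⟩).elim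
          | exact (hnuw' ⟨hm₃, hm₂⟩).elim
    · intro i j hi hj1 hj2 heq
      exact hpairins (2 * j - 1) _ (hEmrow i hi) heq
    · intro j hj1 hj2 heq
      exact hpairins (4 * j - 2) _ (hEmrow T₁ le_rfl) heq
    · intro j hj1 hj2 heq
      exact hpairins (4 * j) _ (hEmrow 0 (by omega)) heq
  have hpairne : ∀ (m m' : ℕ), m ≠ m' → ((r : ℕ), m) ≠ ((r : ℕ), m') :=
    fun m m' h hh => h (Prod.ext_iff.1 hh).2
  -- the main claim
  have main : ∀ f, f ⊆ Astar k r → f.card = r + 1 →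
      ∀ e₀, f.powersetCard r \ Hinf r k T₁ H₁ e ≠ {e₀} := by
    intro f hfA hfc e₀ hdiff
    have hRsub : f.filter (fun x => x.1 = r) ⊆ f := filter_subset _ _
    set R := f.filter (fun x => x.1 = r) with hRdef
    have hRrow : ∀ x ∈ R, x.1 = r := fun x hx => (mem_filter.1 hx).2
    have hmemR : ∀ x ∈ f, x.1 = r → x ∈ R := fun x hx hxr => mem_filter.2 ⟨hx, hxr⟩
    have hfA2 : ∀ x ∈ f, 1 ≤ x.1 ∧ x.1 ≤ r ∧ 1 ≤ x.2 ∧ x.2 ≤ 4 * k - 3 :=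
      fun x hx => mem_Astar_iff.1 (hfA hx)
    have htwo : ∀ x y : ℕ × ℕ, x ∈ f → y ∈ f → x ≠ y →
        f.erase x ∉ Hinf r k T₁ H₁ e → f.erase y ∉ Hinf r k T₁ H₁ e → False := by
      intro x y hx hy hxy hmx hmy
      have h1 : f.erase x ∈ f.powersetCard r \ Hinf r k T₁ H₁ e := by
        rw [mem_sdiff, mem_powersetCard]
        exact ⟨⟨erase_subset _ _, by rw [card_erase_of_mem hx]; omega⟩, hmx⟩
      have h2 : f.erase y ∈ f.powersetCard r \ Hinf r k T₁ H₁ e := by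
        rw [mem_sdiff, mem_powersetCard]
        exact ⟨⟨erase_subset _ _, by rw [card_erase_of_mem hy]; omega⟩, hmy⟩
      rw [hdiff, mem_singleton] at h1 h2
      have h12 : f.erase x = f.erase y := h1.trans h2.symm
      have hyx : y ∈ f.erase x := mem_erase.2 ⟨fun h => hxy h.symm, hy⟩
      rw [h12] at hyx
      exact notMem_erase _ _ hyx
    obtain h0 | h1 | h2 | h3 | h4 :
        R.card = 0 ∨ R.card = 1 ∨ R.card = 2 ∨ R.card = 3 ∨ 4 ≤ R.card := by omega
    · -- |R| = 0
      have hRe : R = ∅ := card_eq_zero.1 h0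
      have hfnr : ∀ x ∈ f, x.1 ≠ r := by
        intro x hx hxr
        have hh := hmemR x hx hxr
        rw [hRe] at hh
        exact notMem_empty x hh
      have hfW₁ : f ⊆ Astar k (r - 1) ∪ {((r : ℕ), (1 : ℕ))} := by
        intro x hx
        refine mem_union_left _ (mem_Astar_iff.2 ?_)
        have h := hfA2 x hx
        have h2 := hfnr x hx
        omega
      refine stationary_no_singleton hG₁stat hfW₁ hfc
        (transfer_singleton id id ?_ ?_ hdiff)
      · intro g hsub hc
        simp only [id_eq]
        refine ⟨hsub, hc, ?_⟩
        constructor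
        · intro hg
          exact mem_union_left _ (hCC0 g hg (fun z hz => hfnr z (hsub hz)))
        · intro hg
          rcases mem_union.1 hg with h | h
          · exact hH₁Hinf _ h
          · exfalso
            obtain ⟨i, hi, heq⟩ := mem_image.1 h
            have hi' : i ≤ T₁ := by have := mem_range.1 hi; omega
            exact hfnr _ (hsub (by rw [← heq]; exact hv i hi')) rfl
      · intro g' hsub' hc'
        simp only [id_eq]
        exact ⟨hsub', hc', trivial⟩
    · -- |R| = 1
      obtain ⟨a, ha⟩ := card_eq_one.1 h1
      have haR : a ∈ R := by rw [ha]; exact mem_singleton_self a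
      have haf : a ∈ f := hRsub haR
      have har : a.1 = r := hRrow _ haR
      have haa : ((r : ℕ), a.2) = a := by rw [← har]
      have hothers : ∀ x ∈ f, x ≠ a → x.1 ≠ r := by
        intro x hx hxa hxr
        have hh := hmemR x hx hxr
        rw [ha, mem_singleton] at hh
        exact hxa hh
      have habound := hfA2 a haf
      rcases Nat.even_or_odd a.2 with hme | hmo
      · -- a.2 even: at most one erased-subset through a is infected
        rw [Nat.even_iff] at hme
        have huniq : ∀ x ∈ f, x ≠ a → f.erase x ∈ Hinf r k T₁ H₁ e →
            (f.erase x).erase a = (if a.2 % 4 = 2 then (e T₁).erase ((r : ℕ), (1 : ℕ))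
              else (e 0).erase ((r : ℕ), (1 : ℕ))) := by
          intro x hx hxa hmem
          have hax : a ∈ f.erase x := mem_erase.2 ⟨fun h => hxa h.symm, haf⟩
          have hrows : ∀ z ∈ (f.erase x).erase a, z.1 ≠ r := fun z hz =>
            hothers z (mem_of_mem_erase (mem_of_mem_erase hz)) (mem_erase.1 hz).1
          have hform : insert ((r : ℕ), a.2) ((f.erase x).erase a) = f.erase x := by
            rw [haa, insert_erase hax]
          have hh := hCCeven a.2 _ hme hrows (by rw [hform]; exact hmem)
          rcases hh with ⟨hc4, hcs⟩ | ⟨hc4, hcs⟩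
          · rw [if_pos hc4]; exact hcs
          · rw [if_neg (by omega)]; exact hcs
        have hatmost : ∀ x y, x ∈ f → y ∈ f → x ≠ a → y ≠ a → x ≠ y →
            f.erase x ∈ Hinf r k T₁ H₁ e → f.erase y ∈ Hinf r k T₁ H₁ e → False := by
          intro x y hx hy hxa hya hxy hhx hhy
          have e1 := huniq x hx hxa hhx
          have e2 := huniq y hy hya hhy
          have h12 := e1.trans e2.symm
          have hyy : y ∈ (f.erase x).erase a :=
            mem_erase.2 ⟨hya, mem_erase.2 ⟨fun h => hxy h.symm, hy⟩⟩
          rw [h12] at hyy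
          exact notMem_erase y _ (mem_of_mem_erase hyy)
        obtain ⟨t, hts, htc⟩ := exists_subset_card_eq (show 3 ≤ (f.erase a).card by
          rw [card_erase_of_mem haf]; omega)
        obtain ⟨x₁, x₂, x₃, h12, h13, h23, rfl⟩ := card_eq_three.1 htc
        have hx₁ : x₁ ∈ f.erase a := hts (by simp)
        have hx₂ : x₂ ∈ f.erase a := hts (by simp)
        have hx₃ : x₃ ∈ f.erase a := hts (by simp)
        have hx₁f : x₁ ∈ f := mem_of_mem_erase hx₁
        have hx₂f : x₂ ∈ f := mem_of_mem_erase hx₂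
        have hx₃f : x₃ ∈ f := mem_of_mem_erase hx₃
        have hx₁a : x₁ ≠ a := (mem_erase.1 hx₁).1
        have hx₂a : x₂ ≠ a := (mem_erase.1 hx₂).1
        have hx₃a : x₃ ≠ a := (mem_erase.1 hx₃).1
        by_cases hh1 : f.erase x₁ ∈ Hinf r k T₁ H₁ e
        · refine htwo x₂ x₃ hx₂f hx₃f h23 ?_ ?_
          · exact fun h => hatmost x₁ x₂ hx₁f hx₂f hx₁a hx₂a h12 hh1 h
          · exact fun h => hatmost x₁ x₃ hx₁f hx₃f hx₁a hx₃a h13 hh1 h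
        · by_cases hh2 : f.erase x₂ ∈ Hinf r k T₁ H₁ e
          · refine htwo x₁ x₃ hx₁f hx₃f h13 hh1 ?_
            exact fun h => hatmost x₂ x₃ hx₂f hx₃f hx₂a hx₃a h23 hh2 h
          · exact htwo x₁ x₂ hx₁f hx₂f h12 hh1 hh2
      · -- a.2 odd: transfer to the stationary graph on W₁
        rw [Nat.odd_iff] at hmo
        have h1fa : ((r : ℕ), (1 : ℕ)) ∉ f.erase a :=
          fun h => hothers _ (mem_of_mem_erase h) (mem_erase.1 h).1 rfl
        have hf'W : insert ((r : ℕ), (1 : ℕ)) (f.erase a) ⊆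
            Astar k (r - 1) ∪ {((r : ℕ), (1 : ℕ))} := by
          intro x hx
          rcases mem_insert.1 hx with rfl | hx
          · exact mem_union_right _ (mem_singleton_self _)
          · refine mem_union_left _ (mem_Astar_iff.2 ?_)
            have h := hfA2 x (mem_of_mem_erase hx)
            have h2 := hothers x (mem_of_mem_erase hx) (mem_erase.1 hx).1
            omega
        have hf'c : (insert ((r : ℕ), (1 : ℕ)) (f.erase a)).card = r + 1 := by
          rw [card_insert_of_notMem h1fa, card_erase_of_mem haf]; omega
        refine stationary_no_singleton hG₁stat hf'W hf'c (transfer_singleton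
          (f' := insert ((r : ℕ), (1 : ℕ)) (f.erase a))
          (fun g => if a ∈ g then insert ((r : ℕ), (1 : ℕ)) (g.erase a) else g)
          (fun g' => if ((r : ℕ), (1 : ℕ)) ∈ g' then insert a (g'.erase ((r : ℕ), (1 : ℕ)))
            else g') ?_ ?_ hdiff)
        · intro g hsub hc
          by_cases hag : a ∈ g
          · simp only [if_pos hag]
            have h1g : ((r : ℕ), (1 : ℕ)) ∉ g.erase a :=
              fun h => hothers _ (hsub (mem_of_mem_erase h)) (mem_erase.1 h).1 rfl
            have hrows : ∀ z ∈ g.erase a, z.1 ≠ r :=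
              fun z hz => hothers z (hsub (mem_of_mem_erase hz)) (mem_erase.1 hz).1
            refine ⟨insert_subset_insert _ (erase_subset_erase _ hsub), ?_, ?_⟩
            · rw [card_insert_of_notMem h1g, card_erase_of_mem hag, hc]; omega
            · have hform : insert ((r : ℕ), a.2) (g.erase a) = g := by
                rw [haa, insert_erase hag]
              constructor
              · intro hg
                exact hCCoddF a.2 _ hmo hrows (by rw [hform]; exact hg)
              · intro hg
                have hh := hCCoddB a.2 _ hmo (by omega) hrows hg
                rw [hform] at hh
                exact hh
          · simp only [if_neg hag]
            have hrows : ∀ z ∈ g, z.1 ≠ r := fun z hz =>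
              hothers z (hsub hz) (fun h => hag (h ▸ hz))
            refine ⟨fun z hz => mem_insert_of_mem
              (mem_erase.2 ⟨fun h => hag (h ▸ hz), hsub hz⟩), hc, ?_⟩
            constructor
            · intro hg
              exact mem_union_left _ (hCC0 g hg hrows)
            · intro hg
              rcases mem_union.1 hg with h | h
              · exact hH₁Hinf _ h
              · exfalso
                obtain ⟨i, hi, heq⟩ := mem_image.1 h
                have hi' : i ≤ T₁ := by have := mem_range.1 hi; omega
                exact hrows _ (by rw [← heq]; exact hv i hi') rfl
        · intro g' hsub' hc'
          by_cases h1g : ((r : ℕ), (1 : ℕ)) ∈ g'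
          · simp only [if_pos h1g]
            have hag' : a ∉ g'.erase ((r : ℕ), (1 : ℕ)) := by
              intro h
              obtain ⟨hane, hag''⟩ := mem_erase.1 h
              rcases mem_insert.1 (hsub' hag'') with h' | h'
              · exact hane h'
              · exact notMem_erase a f h'
            refine ⟨?_, ?_, ?_⟩
            · intro z hz
              rcases mem_insert.1 hz with rfl | hz
              · exact haf
              · have hh := erase_subset_erase ((r : ℕ), (1 : ℕ)) hsub' hz
                rw [erase_insert h1fa] at hh
                exact mem_of_mem_erase hh
            · rw [card_insert_of_notMem hag', card_erase_of_mem h1g, hc']; omega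
            · simp only [if_pos (mem_insert_self a _)]
              rw [erase_insert hag', insert_erase h1g]
          · simp only [if_neg h1g]
            have hsubf : g' ⊆ f := by
              intro z hz
              rcases mem_insert.1 (hsub' hz) with h' | h'
              · exact absurd (h' ▸ hz) h1g
              · exact mem_of_mem_erase h'
            have hag : a ∉ g' := by
              intro h
              rcases mem_insert.1 (hsub' h) with h' | h'
              · exact h1g (h' ▸ h)
              · exact notMem_erase a f h'
            refine ⟨hsubf, hc', ?_⟩
            simp only [if_neg hag]
    · -- |R| = 2
      obtain ⟨a0, b0, hab0, hRe0⟩ := card_eq_two.1 h2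
      have key : ∀ a b : ℕ × ℕ, a ≠ b → R = {a, b} → a.2 < b.2 → False := by
        intro a b hab hRe hlt
        have haR : a ∈ R := by rw [hRe]; simp
        have hbR : b ∈ R := by rw [hRe]; simp
        have haf := hRsub haR
        have hbf := hRsub hbR
        have har := hRrow _ haR
        have hbr := hRrow _ hbR
        have haa : ((r : ℕ), a.2) = a := by rw [← har]
        have hbb : ((r : ℕ), b.2) = b := by rw [← hbr]
        have habound := hfA2 a haf
        have hbbound := hfA2 b hbf
        have hoth : ∀ x ∈ f, x ≠ a → x ≠ b → x.1 ≠ r := by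
          intro x hx hxa hxb hxr
          have hh := hmemR x hx hxr
          rw [hRe, mem_insert, mem_singleton] at hh
          tauto
        by_cases hcons : b.2 = a.2 + 1
        · -- consecutive pair
          have hbfa : b ∈ f.erase a := mem_erase.2 ⟨Ne.symm hab, hbf⟩
          have hafb : a ∈ f.erase b := mem_erase.2 ⟨hab, haf⟩
          set S := (f.erase a).erase b with hSdef
          set em := (if a.2 % 4 = 1 ∨ a.2 % 4 = 2 then (e T₁).erase ((r : ℕ), (1 : ℕ))
            else (e 0).erase ((r : ℕ), (1 : ℕ))) with hemdef
          have hScard : S.card = r - 1 := by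
            rw [hSdef, card_erase_of_mem hbfa, card_erase_of_mem haf, hfc]; omega
          have hSrows : ∀ z ∈ S, z.1 ≠ r := by
            intro z hz
            rw [hSdef, mem_erase, mem_erase] at hz
            exact hoth z hz.2.2 hz.2.1 hz.1
          have hSsubf : ∀ z ∈ S, z ∈ f := by
            intro z hz
            rw [hSdef, mem_erase, mem_erase] at hz
            exact hz.2.2
          have hSa : ∀ z ∈ S, z ≠ a := by
            intro z hz
            rw [hSdef, mem_erase, mem_erase] at hz
            exact hz.2.1
          have hSb : ∀ z ∈ S, z ≠ b := by
            intro z hz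
            rw [hSdef, mem_erase, mem_erase] at hz
            exact hz.1
          have hemcard : em.card = r - 1 := by
            rw [hemdef]
            split
            · exact hEmcard T₁ le_rfl
            · exact hEmcard 0 (by omega)
          have hfa_eq : f.erase a = insert b S := by rw [hSdef, insert_erase hbfa]
          have hfb_eq : f.erase b = insert a S := by
            rw [hSdef, Finset.erase_right_comm, insert_erase hafb]
          by_cases hSem : S = em
          · -- every r-subset of f is infected: contradiction with hdiff
            have hall : ∀ x ∈ f, f.erase x ∈ Hinf r k T₁ H₁ e := by
              intro x hxf
              by_cases hxa : x = a
              · subst hxa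
                rw [hfa_eq, hSem, ← hbb]
                by_cases hcond : x.2 % 4 = 1 ∨ x.2 % 4 = 2
                · rw [hemdef, if_pos hcond]
                  exact hPresT b.2 (by omega) (by omega) (by omega)
                · rw [hemdef, if_neg hcond]
                  exact hPres0 b.2 (by omega) (by omega) (by omega)
              · by_cases hxb : x = b
                · subst hxb
                  rw [hfb_eq, hSem, ← haa]
                  by_cases hcond : a.2 % 4 = 1 ∨ a.2 % 4 = 2
                  · rw [hemdef, if_pos hcond]
                    exact hPresT a.2 (by omega) (by omega) (by omega)
                  · rw [hemdef, if_neg hcond]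
                    exact hPres0 a.2 (by omega) (by omega) (by omega)
                · have hxS : x ∈ S := by
                    rw [hSdef]
                    exact mem_erase.2 ⟨hxb, mem_erase.2 ⟨hxa, hxf⟩⟩
                  have hfx_eq : f.erase x = insert a (insert b (S.erase x)) := by
                    have hfeq : f = insert a (insert b S) := by
                      rw [← hfa_eq, insert_erase haf]
                    rw [hfeq, erase_insert_of_ne (fun h => hxa h.symm),
                      erase_insert_of_ne (fun h => hxb h.symm)]
                  have hxem : x ∈ em := by rw [← hSem]; exact hxS
                  have hSx : S.erase x = em.erase x := by rw [hSem]
                  rw [hfx_eq, hSx]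
                  have h1a : 1 ≤ a.2 := habound.2.2.1
                  have hbk : b.2 ≤ 4 * k - 3 := hbbound.2.2.2
                  rcases (show a.2 % 4 = 1 ∨ a.2 % 4 = 2 ∨ a.2 % 4 = 3 ∨ a.2 % 4 = 0
                      by omega) with h4 | h4 | h4 | h4
                  · -- a = u, b = v of H_{4j-2}
                    have hemT : em = (e T₁).erase ((r : ℕ), (1 : ℕ)) := by
                      rw [hemdef]; exact if_pos (Or.inl h4)
                    rw [hemT] at hxem ⊢
                    refine hGT_mem ((a.2 + 3) / 4) (by omega) (by omega) _ ?_
                    have heqset : insert ((r : ℕ), 4 * ((a.2 + 3) / 4) - 2)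
                        (insert ((r : ℕ), 4 * ((a.2 + 3) / 4) - 3)
                          (((e T₁).erase ((r : ℕ), (1 : ℕ))).erase x)) =
                        insert a (insert b (((e T₁).erase ((r : ℕ), (1 : ℕ))).erase x)) := by
                      rw [show 4 * ((a.2 + 3) / 4) - 3 = a.2 from by omega,
                        show 4 * ((a.2 + 3) / 4) - 2 = b.2 from by omega, haa, hbb,
                        Finset.insert_comm]
                    rw [← heqset]
                    exact insert_mem_gadget rfl rfl rfl (hpairne _ _ (by omega))
                      (hpairne _ _ (by omega)) (hpairne _ _ (by omega))
                      (hEmrow T₁ le_rfl) (hEmcard T₁ le_rfl) hr (Or.inl rfl) hxem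
                  · -- a = v, b = w of H_{4j-2}
                    have hemT : em = (e T₁).erase ((r : ℕ), (1 : ℕ)) := by
                      rw [hemdef]; exact if_pos (Or.inr h4)
                    rw [hemT] at hxem ⊢
                    refine hGT_mem ((a.2 + 2) / 4) (by omega) (by omega) _ ?_
                    have heqset : insert ((r : ℕ), 4 * ((a.2 + 2) / 4) - 2)
                        (insert ((r : ℕ), 4 * ((a.2 + 2) / 4) - 1)
                          (((e T₁).erase ((r : ℕ), (1 : ℕ))).erase x)) =
                        insert a (insert b (((e T₁).erase ((r : ℕ), (1 : ℕ))).erase x)) := by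
                      rw [show 4 * ((a.2 + 2) / 4) - 2 = a.2 from by omega,
                        show 4 * ((a.2 + 2) / 4) - 1 = b.2 from by omega, haa, hbb]
                    rw [← heqset]
                    exact insert_mem_gadget rfl rfl rfl (hpairne _ _ (by omega))
                      (hpairne _ _ (by omega)) (hpairne _ _ (by omega))
                      (hEmrow T₁ le_rfl) (hEmcard T₁ le_rfl) hr (Or.inr rfl) hxem
                  · -- a = u, b = v of H_{4j}
                    have hem0 : em = (e 0).erase ((r : ℕ), (1 : ℕ)) := by
                      rw [hemdef]; exact if_neg (by omega)
                    rw [hem0] at hxem ⊢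
                    refine hG0_mem ((a.2 + 1) / 4) (by omega) (by omega) _ ?_
                    have heqset : insert ((r : ℕ), 4 * ((a.2 + 1) / 4))
                        (insert ((r : ℕ), 4 * ((a.2 + 1) / 4) - 1)
                          (((e 0).erase ((r : ℕ), (1 : ℕ))).erase x)) =
                        insert a (insert b (((e 0).erase ((r : ℕ), (1 : ℕ))).erase x)) := by
                      rw [show 4 * ((a.2 + 1) / 4) - 1 = a.2 from by omega,
                        show 4 * ((a.2 + 1) / 4) = b.2 from by omega, haa, hbb,
                        Finset.insert_comm]
                    rw [← heqset]
                    exact insert_mem_gadget rfl rfl rfl (hpairne _ _ (by omega))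
                      (hpairne _ _ (by omega)) (hpairne _ _ (by omega))
                      (hEmrow 0 (by omega)) (hEmcard 0 (by omega)) hr (Or.inl rfl) hxem
                  · -- a = v, b = w of H_{4j}
                    have hem0 : em = (e 0).erase ((r : ℕ), (1 : ℕ)) := by
                      rw [hemdef]; exact if_neg (by omega)
                    rw [hem0] at hxem ⊢
                    refine hG0_mem (a.2 / 4) (by omega) (by omega) _ ?_
                    have heqset : insert ((r : ℕ), 4 * (a.2 / 4))
                        (insert ((r : ℕ), 4 * (a.2 / 4) + 1)
                          (((e 0).erase ((r : ℕ), (1 : ℕ))).erase x)) =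
                        insert a (insert b (((e 0).erase ((r : ℕ), (1 : ℕ))).erase x)) := by
                      rw [show 4 * (a.2 / 4) + 1 = b.2 from by omega,
                        show 4 * (a.2 / 4) = a.2 from by omega, haa, hbb,
                        Finset.insert_comm]
                    rw [← heqset]
                    exact insert_mem_gadget rfl rfl rfl (hpairne _ _ (by omega))
                      (hpairne _ _ (by omega)) (hpairne _ _ (by omega))
                      (hEmrow 0 (by omega)) (hEmcard 0 (by omega)) hr (Or.inr rfl) hxem
            have he₀ : e₀ ∈ f.powersetCard r \ Hinf r k T₁ H₁ e := by
              rw [hdiff]; exact mem_singleton_self _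
            rw [mem_sdiff, mem_powersetCard] at he₀
            obtain ⟨⟨hsub0, hc0⟩, hn0⟩ := he₀
            obtain ⟨x, hxf, -, hx_eq⟩ := exists_erase_of_subset hsub0 hfc hc0
            exact hn0 (hx_eq ▸ hall x hxf)
          · -- S ≠ em : exhibit two missing subsets
            have hSnotsub : ¬ S ⊆ em :=
              fun h => hSem (eq_of_subset_of_card_le h (by omega))
            obtain ⟨y, hyS, hyem⟩ := not_subset.1 hSnotsub
            have hxcard : 0 < (S.erase y).card := by
              rw [card_erase_of_mem hyS]; omega
            obtain ⟨x, hx⟩ := card_pos.1 hxcard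
            obtain ⟨hxy, hxS⟩ := mem_erase.1 hx
            have hySf : y ∈ f := hSsubf y hyS
            have hxSf : x ∈ f := hSsubf x hxS
            have hmiss1 : f.erase x ∉ Hinf r k T₁ H₁ e := by
              intro hmem
              have hh := hCC2em _ a b hmem
                (mem_erase.2 ⟨fun h => (hSa x hxS) h.symm, haf⟩)
                (mem_erase.2 ⟨fun h => (hSb x hxS) h.symm, hbf⟩) har hbr hcons
                y (mem_erase.2 ⟨fun h => hxy h.symm, hySf⟩) (hSrows y hyS)
              rw [← hemdef] at hh
              exact hyem hh
            rcases Nat.even_or_odd a.2 with hpe | hpo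
            · rw [Nat.even_iff] at hpe
              have hmiss2 : f.erase b ∉ Hinf r k T₁ H₁ e := by
                intro hmem
                rw [hfb_eq] at hmem
                have hh := hCCeven a.2 S hpe hSrows (by rw [haa]; exact hmem)
                rcases hh with ⟨h4, hSeq⟩ | ⟨h4, hSeq⟩
                · exact hSem (by rw [hemdef, if_pos (Or.inr h4)]; exact hSeq)
                · exact hSem (by rw [hemdef, if_neg (by omega)]; exact hSeq)
              exact htwo x b hxSf hbf (hSb x hxS) hmiss1 hmiss2
            · rw [Nat.odd_iff] at hpo
              have hmiss2 : f.erase a ∉ Hinf r k T₁ H₁ e := by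
                intro hmem
                rw [hfa_eq] at hmem
                have hh := hCCeven b.2 S (by omega) hSrows (by rw [hbb]; exact hmem)
                rcases hh with ⟨h4, hSeq⟩ | ⟨h4, hSeq⟩
                · exact hSem (by rw [hemdef, if_pos (Or.inl (by omega))]; exact hSeq)
                · exact hSem (by rw [hemdef, if_neg (by omega)]; exact hSeq)
              exact htwo x a hxSf haf (hSa x hxS) hmiss1 hmiss2
        · -- non-consecutive pair
          have hcard2 : 1 < ((f.erase a).erase b).card := by
            rw [card_erase_of_mem (mem_erase.2 ⟨Ne.symm hab, hbf⟩), card_erase_of_mem haf,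
              hfc]
            omega
          obtain ⟨x₁, hx₁, x₂, hx₂, h12⟩ := one_lt_card.1 hcard2
          have hmissx : ∀ x, x ∈ (f.erase a).erase b → f.erase x ∉ Hinf r k T₁ H₁ e := by
            intro x hx hmem
            obtain ⟨hxb, hx'⟩ := mem_erase.1 hx
            obtain ⟨hxa, hxf⟩ := mem_erase.1 hx'
            have hcon := hCC2consec _ a b hmem
              (mem_erase.2 ⟨fun h => hxa h.symm, haf⟩)
              (mem_erase.2 ⟨fun h => hxb h.symm, hbf⟩) har hbr hab
            omega
          exact htwo x₁ x₂ (mem_of_mem_erase (mem_of_mem_erase hx₁))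
            (mem_of_mem_erase (mem_of_mem_erase hx₂)) h12 (hmissx x₁ hx₁) (hmissx x₂ hx₂)
      have hne2 : a0.2 ≠ b0.2 := by
        intro h
        have ha0 : a0 ∈ R := by rw [hRe0]; simp
        have hb0 : b0 ∈ R := by rw [hRe0]; simp
        refine hab0 ?_
        have h1 : ((r : ℕ), a0.2) = a0 := by rw [← hRrow _ ha0]
        have h2 : ((r : ℕ), b0.2) = b0 := by rw [← hRrow _ hb0]
        rw [← h1, ← h2, h]
      rcases Nat.lt_or_ge a0.2 b0.2 with hlt | hge
      · exact key a0 b0 hab0 hRe0 hlt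
      · exact key b0 a0 (Ne.symm hab0) (by rw [hRe0]; exact pair_comm a0 b0) (by omega)
    · -- |R| = 3
      obtain ⟨a, b, c, hab, hac, hbc, hRe⟩ := card_eq_three.1 h3
      have haR : a ∈ R := by rw [hRe]; simp
      have hbR : b ∈ R := by rw [hRe]; simp
      have hcR : c ∈ R := by rw [hRe]; simp
      have haf := hRsub haR
      have hbf := hRsub hbR
      have hcf := hRsub hcR
      have har := hRrow _ haR
      have hbr := hRrow _ hbR
      have hcr := hRrow _ hcR
      have haa : ((r : ℕ), a.2) = a := by rw [← har]
      have hbb : ((r : ℕ), b.2) = b := by rw [← hbr]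
      have hcc : ((r : ℕ), c.2) = c := by rw [← hcr]
      have hab2 : a.2 ≠ b.2 := fun h => hab (by rw [← haa, ← hbb, h])
      have hac2 : a.2 ≠ c.2 := fun h => hac (by rw [← haa, ← hcc, h])
      have hbc2 : b.2 ≠ c.2 := fun h => hbc (by rw [← hbb, ← hcc, h])
      have hfR : 0 < (f \ R).card := by rw [card_sdiff_of_subset hRsub]; omega
      obtain ⟨x₀, hx₀⟩ := card_pos.1 hfR
      rw [mem_sdiff] at hx₀
      have hmiss1 : f.erase x₀ ∉ Hinf r k T₁ H₁ e := by
        intro h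
        exact hCC3 _ a b c h
          (mem_erase.2 ⟨fun hh => hx₀.2 (hh ▸ haR), haf⟩)
          (mem_erase.2 ⟨fun hh => hx₀.2 (hh ▸ hbR), hbf⟩)
          (mem_erase.2 ⟨fun hh => hx₀.2 (hh ▸ hcR), hcf⟩)
          har hbr hcr hab hac hbc
      have hpair : (b.2 ≠ c.2 + 1 ∧ c.2 ≠ b.2 + 1) ∨ (a.2 ≠ c.2 + 1 ∧ c.2 ≠ a.2 + 1) ∨
          (a.2 ≠ b.2 + 1 ∧ b.2 ≠ a.2 + 1) := by omega
      rcases hpair with ⟨hp1, hp2⟩ | ⟨hp1, hp2⟩ | ⟨hp1, hp2⟩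
      · refine htwo x₀ a hx₀.1 haf (fun hh => hx₀.2 (hh ▸ haR)) hmiss1 ?_
        intro h
        have hcons := hCC2consec _ b c h
          (mem_erase.2 ⟨Ne.symm hab, hbf⟩) (mem_erase.2 ⟨Ne.symm hac, hcf⟩) hbr hcr hbc
        omega
      · refine htwo x₀ b hx₀.1 hbf (fun hh => hx₀.2 (hh ▸ hbR)) hmiss1 ?_
        intro h
        have hcons := hCC2consec _ a c h
          (mem_erase.2 ⟨hab, haf⟩) (mem_erase.2 ⟨Ne.symm hbc, hcf⟩) har hcr hac
        omega
      · refine htwo x₀ c hx₀.1 hcf (fun hh => hx₀.2 (hh ▸ hcR)) hmiss1 ?_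
        intro h
        have hcons := hCC2consec _ a b h
          (mem_erase.2 ⟨hac, haf⟩) (mem_erase.2 ⟨hbc, hbf⟩) har hbr hab
        omega
    · -- |R| ≥ 4
      have hall : ∀ x, f.erase x ∉ Hinf r k T₁ H₁ e := by
        intro x hmem
        have h3le : 3 ≤ (R.erase x).card := by
          have hh := Finset.pred_card_le_card_erase (s := R) (a := x)
          omega
        obtain ⟨t, hts, htc⟩ := exists_subset_card_eq h3le
        obtain ⟨z₁, z₂, z₃, h12, h13, h23, rfl⟩ := card_eq_three.1 htc
        have m₁ : z₁ ∈ R.erase x := hts (by simp)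
        have m₂ : z₂ ∈ R.erase x := hts (by simp)
        have m₃ : z₃ ∈ R.erase x := hts (by simp)
        exact hCC3 _ z₁ z₂ z₃ hmem
          (mem_erase.2 ⟨(mem_erase.1 m₁).1, hRsub (mem_of_mem_erase m₁)⟩)
          (mem_erase.2 ⟨(mem_erase.1 m₂).1, hRsub (mem_of_mem_erase m₂)⟩)
          (mem_erase.2 ⟨(mem_erase.1 m₃).1, hRsub (mem_of_mem_erase m₃)⟩)
          (hRrow _ (mem_of_mem_erase m₁)) (hRrow _ (mem_of_mem_erase m₂))
          (hRrow _ (mem_of_mem_erase m₃)) h12 h13 h23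
      have hflt : 1 < f.card := by omega
      obtain ⟨x, hx, y, hy, hxy⟩ := one_lt_card.1 hflt
      exact htwo x y hx hy hxy (hall x) (hall y)
  -- conclude stationarity
  show bootStep r (Astar k r) (Hinf r k T₁ H₁ e) = Hinf r k T₁ H₁ e
  unfold bootStep
  rw [union_eq_left]
  intro x hx
  simp only [Finset.mem_filter] at hx
  obtain ⟨f, hf, hd⟩ := hx.2
  exact absurd hd (main f (mem_powersetCard.1 hf).1 (mem_powersetCard.1 hf).2 x)
end

section
/- Let r ≥ 3 and n ≥ 2r² be integers and set k = ⌊(n/r + 3)/4⌋. Then k ≥ 2, r(4k−3) ≤ n, and (2k−1)^{r−2}(8k² − 12k + 6) − 2 ≥ (2k−1)^r ≥ (1/8)·(n/(2r))^r. -/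
open Finset

lemma aux_exp (t : ℝ) (ht0 : 0 ≤ t) (ht : t ≤ 1/2) : (2:ℝ) ^ (-(2*t)) ≤ 1 - t := by
  have h := convexOn_exp.2 (Set.mem_univ (0:ℝ)) (Set.mem_univ (-Real.log 2))
    (show (0:ℝ) ≤ 1 - 2*t by linarith) (show (0:ℝ) ≤ 2*t by linarith) (by ring)
  simp only [smul_eq_mul, mul_zero, zero_add, Real.exp_zero, mul_one] at h
  rw [Real.exp_neg, Real.exp_log (by norm_num)] at h
  rw [Real.rpow_def_of_pos (by norm_num : (0:ℝ) < 2)]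
  calc Real.exp (Real.log 2 * -(2*t)) = Real.exp (2*t * -Real.log 2) := by ring_nf
    _ ≤ 1 - 2*t + 2*t * 2⁻¹ := h
    _ ≤ 1 - t := by linarith

lemma aux_pow (t : ℝ) (r : ℕ) (ht0 : 0 ≤ t) (ht : t ≤ 1/2) (htr : 2 * t * r ≤ 3) :
    (1/8 : ℝ) ≤ (1 - t) ^ r := by
  have h1 : ((2:ℝ) ^ (-(2*t))) ^ r ≤ (1 - t) ^ r :=
    pow_le_pow_left₀ (Real.rpow_nonneg (by norm_num) _) (aux_exp t ht0 ht) r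
  refine le_trans ?_ h1
  rw [← Real.rpow_natCast ((2:ℝ) ^ (-(2*t))) r, ← Real.rpow_mul (by norm_num)]
  have h2 : (2:ℝ) ^ (-(3:ℝ)) ≤ (2:ℝ) ^ (-(2*t) * r) := by
    apply Real.rpow_le_rpow_of_exponent_le (by norm_num)
    nlinarith
  refine le_trans (le_of_eq ?_) h2
  rw [Real.rpow_neg (by norm_num), show ((3:ℝ)) = ((3:ℕ):ℝ) by norm_num,
    Real.rpow_natCast]
  norm_num


/-- the numerical estimates in the proof of the main theorem:
for `r ≥ 3`, `n ≥ 2r²` and `k = ⌊(n/r + 3)/4⌋`, we have `k ≥ 2`,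
`r(4k - 3) ≤ n`, and
`(2k-1)^{r-2}(8k² - 12k + 6) - 2 ≥ (2k-1)^r ≥ (1/8)(n/(2r))^r`. -/
theorem stmt14 (r n : ℕ) (hr : 3 ≤ r) (hn : 2 * r ^ 2 ≤ n) :
    ∀ k : ℕ, k = ⌊(((n : ℝ) / r + 3) / 4)⌋₊ →
      2 ≤ k ∧
      r * (4 * k - 3) ≤ n ∧
      (2 * (k : ℝ) - 1) ^ (r - 2) * (8 * (k : ℝ) ^ 2 - 12 * (k : ℝ) + 6) - 2 ≥
        (2 * (k : ℝ) - 1) ^ r ∧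
      (2 * (k : ℝ) - 1) ^ r ≥ (1 / 8) * ((n : ℝ) / (2 * r)) ^ r := by
  intro k hk
  have hr' : (3:ℝ) ≤ (r:ℝ) := by exact_mod_cast hr
  have hrpos : (0:ℝ) < (r:ℝ) := by linarith
  have hn' : 2 * (r:ℝ) ^ 2 ≤ (n:ℝ) := by exact_mod_cast hn
  -- n/r ≥ 2r
  have hnr : 2 * (r:ℝ) ≤ (n:ℝ) / r := by
    rw [le_div_iff₀ hrpos]; nlinarith
  -- k ≥ 2
  have hk2 : 2 ≤ k := by
    rw [hk]
    apply Nat.le_floor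
    push_cast
    nlinarith
  refine ⟨hk2, ?_, ?_, ?_⟩
  · -- r * (4k - 3) ≤ n
    have hfl : (k:ℝ) ≤ ((n:ℝ) / r + 3) / 4 := by
      rw [hk]; exact Nat.floor_le (by nlinarith)
    have hcast : ((4 * k - 3 : ℕ) : ℝ) = 4 * (k:ℝ) - 3 := by
      have : 3 ≤ 4 * k := by omega
      push_cast [this]; ring
    have : ((r * (4 * k - 3) : ℕ) : ℝ) ≤ (n:ℝ) := by
      push_cast [hcast]
      have h4 : 4 * (k:ℝ) - 3 ≤ (n:ℝ) / r := by linarith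
      calc (r:ℝ) * (4 * (k:ℝ) - 3) ≤ (r:ℝ) * ((n:ℝ)/r) :=
            mul_le_mul_of_nonneg_left h4 (le_of_lt hrpos)
        _ = (n:ℝ) := by field_simp
    exact_mod_cast this
  · -- middle inequality
    have hk2' : (2:ℝ) ≤ (k:ℝ) := by exact_mod_cast hk2
    have ha : (3:ℝ) ≤ 2 * (k:ℝ) - 1 := by linarith
    have hrsplit : (2 * (k:ℝ) - 1) ^ r = (2 * (k:ℝ) - 1) ^ (r - 2) * (2 * (k:ℝ) - 1) ^ 2 := by
      rw [← pow_add]; congr 1; omega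
    rw [ge_iff_le, hrsplit]
    have h1 : (1:ℝ) ≤ (2 * (k:ℝ) - 1) ^ (r - 2) := one_le_pow₀ (by linarith)
    have h5 : (5:ℝ) ≤ 4*(k:ℝ)^2 - 8*(k:ℝ) + 5 := by nlinarith
    have key : (5:ℝ) ≤ (2*(k:ℝ)-1)^(r-2) * (4*(k:ℝ)^2 - 8*(k:ℝ) + 5) := by
      calc (5:ℝ) = 1 * 5 := by ring
        _ ≤ (2*(k:ℝ)-1)^(r-2) * (4*(k:ℝ)^2 - 8*(k:ℝ) + 5) :=
          mul_le_mul h1 h5 (by norm_num) (by linarith)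
    nlinarith [key]
  · -- lower bound
    have hk2' : (2:ℝ) ≤ (k:ℝ) := by exact_mod_cast hk2
    set x : ℝ := (n:ℝ) / (2 * r) with hxdef
    have hxr : (r:ℝ) ≤ x := by
      rw [hxdef, le_div_iff₀ (by linarith)]; nlinarith
    have hxpos : (0:ℝ) < x := by linarith
    -- 2k - 1 ≥ x - 3/2
    have hflt : ((n:ℝ) / r + 3) / 4 < (k:ℝ) + 1 := by
      rw [hk]; exact Nat.lt_floor_add_one _
    have hbig : x - 3/2 ≤ 2 * (k:ℝ) - 1 := by
      have : (n:ℝ) / r = 2 * x := by rw [hxdef]; field_simp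
      rw [this] at hflt; linarith
    have hxm : (0:ℝ) ≤ x - 3/2 := by linarith
    have hp : (x - 3/2) ^ r ≤ (2 * (k:ℝ) - 1) ^ r := pow_le_pow_left₀ hxm hbig r
    refine le_trans ?_ hp
    -- (x - 3/2)^r = x^r * (1 - t)^r with t = 3/(2x)
    have hteq : x - 3/2 = x * (1 - 3/(2*x)) := by field_simp
    have ht0 : (0:ℝ) ≤ 3/(2*x) := by positivity
    have ht : 3/(2*x) ≤ 1/2 := by
      rw [div_le_div_iff₀ (by linarith) (by norm_num)]; linarith
    have htr : 2 * (3/(2*x)) * r ≤ 3 := by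
      have heq : 2 * (3/(2*x)) * r = 3 * r / x := by field_simp
      rw [heq, div_le_iff₀ hxpos]
      nlinarith
    have := aux_pow (3/(2*x)) r ht0 ht htr
    calc (1/8 : ℝ) * x ^ r ≤ (1 - 3/(2*x)) ^ r * x ^ r :=
          mul_le_mul_of_nonneg_right this (by positivity)
      _ = (x - 3/2) ^ r := by rw [hteq, mul_pow]; ring
end
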